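/- arXiv:2505.11705 — 5 statements merged into one kernel-verified Lean document; each statement's English description precedes it below -/
import Mathlib

section
/- For every real r > 1, the quantity (1+2r)^(r-1) / (2r-1)^r is strictly less than 1. -/
/-!
Taking logarithms, the claim is `(r - 1) (log (2r + 1) - log (2r - 1)) < log (2r - 1)`.
By `log t < t - 1` the left side is below `(r - 1) · 2 / (2r - 1) = 1 - 1 / (2r - 1)`,
and by `1 - 1 / t ≤ log t` this is at most `log (2r - 1)`.
-/

open Real

lemma Real.log_sub_log_lt_div {x y : ℝ} (hy : 0 < y) (hyx : y < x) :
    log x - log y < (x - y) / y := by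
  have hx : 0 < x := hy.trans hyx
  calc log x - log y = log (x / y) := (log_div hx.ne' hy.ne').symm
    _ < x / y - 1 := log_lt_sub_one_of_pos (div_pos hx hy) (div_ne_one_of_ne hyx.ne')
    _ = (x - y) / y := by field_simp

lemma sub_one_mul_log_lt_mul_log {r : ℝ} (hr : 1 < r) :
    (r - 1) * log (1 + 2 * r) < r * log (2 * r - 1) := by
  have hpos : 0 < 2 * r - 1 := by linarith
  have hlog_gap := log_sub_log_lt_div hpos (show 2 * r - 1 < 1 + 2 * r by linarith)
  have hlog_lower := one_sub_inv_le_log_of_pos hpos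
  have hscaled : (r - 1) * (log (1 + 2 * r) - log (2 * r - 1)) < 1 - (2 * r - 1)⁻¹ :=
    calc (r - 1) * (log (1 + 2 * r) - log (2 * r - 1))
        < (r - 1) * ((1 + 2 * r - (2 * r - 1)) / (2 * r - 1)) :=
          mul_lt_mul_of_pos_left hlog_gap (by linarith)
      _ = 1 - (2 * r - 1)⁻¹ := by linear_combination mul_inv_cancel₀ hpos.ne'
  linarith

theorem stmt_2 (r : ℝ) (hr : 1 < r) :
    (1 + 2 * r) ^ (r - 1) / (2 * r - 1) ^ r < 1 := by
  have h1 : 0 < 1 + 2 * r := by linarith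
  have h2 : 0 < 2 * r - 1 := by linarith
  rw [div_lt_one (rpow_pos_of_pos h2 r), rpow_def_of_pos h1, rpow_def_of_pos h2, exp_lt_exp,
    mul_comm, mul_comm (log _)]
  exact sub_one_mul_log_lt_mul_log hr
end

section
/- For every real r > 1, define δ^{IPH}(r) = 2(r-1)/((1+2r)^((r-1)/r) - 1) - 1. Then for δ > 0, (1+2r)^(r-1) * (1 + 2(r-1)/(1+δ))^(-r) ≤ 1 if and only if δ ≤ δ^{IPH}(r). -/
theorem stmt_5 (r δ : ℝ) (hr : 1 < r) (hδ : 0 < δ) :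
    (1 + 2 * r) ^ (r - 1) * (1 + 2 * (r - 1) / (1 + δ)) ^ (-r) ≤ 1 ↔
      δ ≤ 2 * (r - 1) / ((1 + 2 * r) ^ ((r - 1) / r) - 1) - 1 := by
  have hr0 : (0:ℝ) < r := by linarith
  have hx : (1:ℝ) < 1 + 2 * r := by linarith
  have hx0 : (0:ℝ) < 1 + 2 * r := by linarith
  have hδ1 : (0:ℝ) < 1 + δ := by linarith
  have hb1 : (1:ℝ) < 1 + 2 * (r - 1) / (1 + δ) := by
    have : 0 < 2 * (r - 1) / (1 + δ) := div_pos (by linarith) hδ1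
    linarith
  have hb0 : (0:ℝ) < 1 + 2 * (r - 1) / (1 + δ) := by linarith
  set a : ℝ := (1 + 2 * r) ^ ((r - 1) / r) with ha
  have ha1 : (1:ℝ) < a := by
    rw [ha]
    exact (Real.one_lt_rpow_iff_of_pos hx0).mpr
      (Or.inl ⟨hx, div_pos (by linarith) hr0⟩)
  have hkey : (1 + 2 * r) ^ (r - 1) = a ^ r := by
    rw [ha, ← Real.rpow_mul hx0.le]
    congr 1
    field_simp
  rw [hkey, Real.rpow_neg hb0.le, mul_inv_le_iff₀ (by positivity), one_mul,
    Real.rpow_le_rpow_iff (by linarith) hb0.le hr0]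
  constructor
  · intro h
    have h2 : a - 1 ≤ 2 * (r - 1) / (1 + δ) := by linarith
    have h3 : (a - 1) * (1 + δ) ≤ 2 * (r - 1) := (le_div_iff₀ hδ1).mp h2
    have h4 : 1 + δ ≤ 2 * (r - 1) / (a - 1) := by
      rw [le_div_iff₀ (by linarith : (0:ℝ) < a - 1)]
      nlinarith
    linarith
  · intro h
    have h4 : 1 + δ ≤ 2 * (r - 1) / (a - 1) := by linarith
    have h3 : (a - 1) * (1 + δ) ≤ 2 * (r - 1) := by
      have := (le_div_iff₀ (by linarith : (0:ℝ) < a - 1)).mp h4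
      nlinarith
    have h2 : a - 1 ≤ 2 * (r - 1) / (1 + δ) := (le_div_iff₀ hδ1).mpr h3
    linarith
end

section
/- For every real r > 1 and δ ≥ 0, define h^{ZS}(r,δ) = (1/(r·e))·((1+δ)/(1-1/r))^(r-1) and h^{B}(r,δ) = (r/(r-1))^(r-1) · (1+δ)^r/(1+δr) · e^{-1}. Then S^B = {(r,δ): h^B ≤ 1} is a subset of S^{ZS} = {(r,δ): h^{ZS} ≤ 1}, i.e. h^{B}(r,δ) ≤ 1 implies h^{ZS}(r,δ) ≤ 1. -/
theorem stmt_12 (r δ : ℝ) (hr : 1 < r) (hδ : 0 ≤ δ) :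
    (r / (r - 1)) ^ (r - 1) * ((1 + δ) ^ r / (1 + δ * r)) * Real.exp (-1) ≤ 1 →
      (1 / (r * Real.exp 1)) * ((1 + δ) / (1 - 1 / r)) ^ (r - 1) ≤ 1 := by
  intro hB
  have hr0 : (0:ℝ) < r := by linarith
  have hr1 : (0:ℝ) < r - 1 := by linarith
  have hb : (0:ℝ) < 1 + δ := by linarith
  have hd : (0:ℝ) < 1 + δ * r := by nlinarith
  have hE : (0:ℝ) < Real.exp 1 := Real.exp_pos 1
  have hP : (0:ℝ) < (1 + δ) ^ (r - 1) := Real.rpow_pos_of_pos hb _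
  have hA : (0:ℝ) < (r / (r - 1)) ^ (r - 1) := Real.rpow_pos_of_pos (by positivity) _
  have hfrac : (1 + δ) / (1 - 1 / r) = (1 + δ) * (r / (r - 1)) := by
    field_simp
  have hpow : ((1 + δ) * (r / (r - 1))) ^ (r - 1)
      = (1 + δ) ^ (r - 1) * (r / (r - 1)) ^ (r - 1) :=
    Real.mul_rpow hb.le (by positivity)
  have hsplit : (1 + δ) ^ r = (1 + δ) ^ (r - 1) * (1 + δ) := by
    have h := Real.rpow_add hb (r - 1) 1
    rw [Real.rpow_one] at h
    simpa using h
  have key : (1 / (r * Real.exp 1)) * ((1 + δ) / (1 - 1 / r)) ^ (r - 1)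
      ≤ (r / (r - 1)) ^ (r - 1) * ((1 + δ) ^ r / (1 + δ * r)) * Real.exp (-1) := by
    calc (1 / (r * Real.exp 1)) * ((1 + δ) / (1 - 1 / r)) ^ (r - 1)
        = (1 + δ) ^ (r - 1) * (r / (r - 1)) ^ (r - 1) / (r * Real.exp 1) := by
          rw [hfrac, hpow]; ring
      _ ≤ (r / (r - 1)) ^ (r - 1) * ((1 + δ) ^ (r - 1) * (1 + δ))
            / ((1 + δ * r) * Real.exp 1) := by
          rw [div_le_div_iff₀ (by positivity) (by positivity)]
          nlinarith [mul_nonneg (mul_pos (mul_pos hP hA) hE).le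
            (by linarith : (0:ℝ) ≤ r - 1)]
      _ = (r / (r - 1)) ^ (r - 1) * ((1 + δ) ^ r / (1 + δ * r)) * Real.exp (-1) := by
          rw [hsplit, Real.exp_neg]; field_simp
  linarith
end

section
/- For every real r > 1 and δ ≥ 0, (1+r)^(r-1)·(1+(r-1)/(1+δ))^{-r} ≤ 1 implies (1+2r)^(r-1)·(1+2(r-1)/(1+δ))^{-r} ≤ 1; that is, S^{IP} ⊆ S^{IPH}. -/
/-!
Put `a = (r - 1) / (1 + δ)`; the claim is that `(1 + r)^(r-1) ≤ (1 + a)^r` forces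
`(1 + 2r)^(r-1) ≤ (1 + 2a)^r`. Since `1 + r ≤ 2^r`, the hypothesis gives `1 + r ≤ 2 (1 + a)`,
which is exactly `2r / (1 + r) ≤ (1 + 2a) / (1 + a)`. Multiplying the hypothesis by the `r`-th
power of this bound gives `(2r)^r / (1 + r) ≤ (1 + 2a)^r`, and the weighted AM-GM inequality with
weights `(r - 1)/r` and `1/r` on `1 + 2r` and `1 + r` (whose weighted mean is `2r`) gives
`(1 + 2r)^(r-1) (1 + r) ≤ (2r)^r`.
-/

open Real

namespace Real

theorem rpow_sub_one_mul_le_rpow_weighted_mean {x y r : ℝ} (hx : 0 ≤ x) (hy : 0 ≤ y)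
    (hr : 1 ≤ r) : x ^ (r - 1) * y ≤ (((r - 1) * x + y) / r) ^ r := by
  have hr0 : 0 < r := by linarith
  have amgm := geom_mean_le_arith_mean2_weighted (w₁ := (r - 1) / r) (w₂ := 1 / r)
    (div_nonneg (by linarith) hr0.le) (by positivity) hx hy (by field_simp; ring)
  calc x ^ (r - 1) * y = (x ^ ((r - 1) / r) * y ^ (1 / r)) ^ r := by
        rw [mul_rpow (by positivity) (by positivity), ← rpow_mul hx, ← rpow_mul hy,
          div_mul_cancel₀ _ hr0.ne', div_mul_cancel₀ _ hr0.ne', rpow_one]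
    _ ≤ ((r - 1) / r * x + 1 / r * y) ^ r := rpow_le_rpow (by positivity) amgm hr0.le
    _ = (((r - 1) * x + y) / r) ^ r := by ring_nf

theorem one_add_two_mul_rpow_sub_one_mul_le {r : ℝ} (hr : 1 ≤ r) :
    (1 + 2 * r) ^ (r - 1) * (1 + r) ≤ (2 * r) ^ r := by
  have hmean : ((r - 1) * (1 + 2 * r) + (1 + r)) / r = 2 * r := by
    field_simp; ring
  simpa only [hmean] using
    rpow_sub_one_mul_le_rpow_weighted_mean (x := 1 + 2 * r) (y := 1 + r)
      (by linarith) (by linarith) hr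

theorem one_add_le_two_mul_one_add_of_rpow_le {r a : ℝ} (hr : 1 ≤ r) (ha : -1 ≤ a)
    (h : (1 + r) ^ (r - 1) ≤ (1 + a) ^ r) : 1 + r ≤ 2 * (1 + a) := by
  have h1r : 0 < 1 + r := by linarith
  have hbernoulli : 1 + r ≤ (2 : ℝ) ^ r := by
    simpa [one_add_one_eq_two] using
      one_add_mul_self_le_rpow_one_add (s := 1) (p := r) (by norm_num) hr
  have hhalf : ((1 + r) / 2) ^ r ≤ (1 + r) ^ (r - 1) := by
    rw [div_rpow h1r.le zero_le_two, rpow_sub h1r, rpow_one]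
    exact div_le_div_of_nonneg_left (by positivity) h1r hbernoulli
  have := (rpow_le_rpow_iff (by positivity) (by linarith) (by linarith)).mp (hhalf.trans h)
  linarith

theorem one_add_two_mul_rpow_le_of_rpow_le {r a : ℝ} (hr : 1 ≤ r) (ha : -1 ≤ a)
    (h : (1 + r) ^ (r - 1) ≤ (1 + a) ^ r) : (1 + 2 * r) ^ (r - 1) ≤ (1 + 2 * a) ^ r := by
  have hmid := one_add_le_two_mul_one_add_of_rpow_le hr ha h
  have h1r : 0 < 1 + r := by linarith
  have h1a : 0 < 1 + a := by linarith
  have hratio : 2 * r / (1 + r) ≤ (1 + 2 * a) / (1 + a) := by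
    rw [div_le_div_iff₀ h1r h1a]; linarith
  calc (1 + 2 * r) ^ (r - 1) ≤ (2 * r) ^ r / (1 + r) :=
        (le_div_iff₀ h1r).mpr (one_add_two_mul_rpow_sub_one_mul_le hr)
    _ = (2 * r / (1 + r)) ^ r * (1 + r) ^ (r - 1) := by
        rw [div_rpow (by linarith) h1r.le, rpow_sub h1r, rpow_one]
        field_simp
    _ ≤ ((1 + 2 * a) / (1 + a)) ^ r * (1 + a) ^ r :=
        mul_le_mul (rpow_le_rpow (by positivity) hratio (by linarith)) h (by positivity)
          (rpow_nonneg (div_nonneg (by linarith) h1a.le) r)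
    _ = (1 + 2 * a) ^ r := by
        rw [← mul_rpow (div_nonneg (by linarith) h1a.le) h1a.le, div_mul_cancel₀ _ h1a.ne']

theorem mul_rpow_neg_le_one_iff {x y r : ℝ} (hy : 0 < y) : x * y ^ (-r) ≤ 1 ↔ x ≤ y ^ r := by
  rw [rpow_neg hy.le, ← div_eq_mul_inv, div_le_one (rpow_pos_of_pos hy r)]

end Real

theorem stmt_13 (r δ : ℝ) (hr : 1 < r) (hδ : 0 ≤ δ) :
    (1 + r) ^ (r - 1) * (1 + (r - 1) / (1 + δ)) ^ (-r) ≤ 1 →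
      (1 + 2 * r) ^ (r - 1) * (1 + 2 * (r - 1) / (1 + δ)) ^ (-r) ≤ 1 := by
  intro h
  have ha : 0 ≤ (r - 1) / (1 + δ) := div_nonneg (by linarith) (by linarith)
  rw [mul_rpow_neg_le_one_iff (by linarith)] at h
  rw [mul_div_assoc, mul_rpow_neg_le_one_iff (by linarith)]
  exact one_add_two_mul_rpow_le_of_rpow_le hr.le (by linarith) h
end

section
/- For every real r > 1 and δ ≥ 0, (1+2r)^(r-1)·(1+2(r-1)/(1+δ))^{-r} ≤ 1 implies (1/(r·e))·((1+δ)/(1-1/r))^(r-1) ≤ 1; that is, S^{IPH} ⊆ S^{ZS}. -/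
/-!
Put `x = 2 (r - 1) / (1 + δ)` and `c = (1 + log r) / (r - 1)`, so that `exp (c (r - 1)) = r e`.
The IPH hypothesis says `(r - 1) log (1 + 2r) ≤ r log (1 + x)`, and the ZS conclusion says
`x₀ ≤ x` for the threshold `x₀ = 2r e^{-c}`. Both conditions are monotone in `x`, so it is
enough that `r log (1 + x₀) ≤ (r - 1) log (1 + 2r)`.

For `r ≤ 2` we have `x₀ ≤ r - 1`, and `r log r ≤ (r - 1) log (1 + 2r)` holds for all `r ≥ 1`.
For `r ≥ 2` the difference of the two sides equals
`1 - log 2 + c + (r - 1) log (1 + 1/(2r)) - r log (1 + e^c/(2r))`. The bound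
`log y ≤ sinh (log y)`, together with the chords of `exp` over `[0, 1]` and `[1, 1 + log 2]`,
turns this into elementary inequalities.
-/

open Real

lemma log_le_half_sub_inv {x : ℝ} (hx : 1 ≤ x) : log x ≤ (x - x⁻¹) / 2 := by
  rw [← sinh_log (by linarith)]
  exact self_le_sinh_iff.2 (log_nonneg hx)

lemma log_one_add_le_of_nonneg {u : ℝ} (hu : 0 ≤ u) :
    log (1 + u) ≤ u * (2 + u) / (2 * (1 + u)) := by
  have h := log_le_half_sub_inv (x := 1 + u) (by linarith)
  have : (1 + u - (1 + u)⁻¹) / 2 = u * (2 + u) / (2 * (1 + u)) := by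
    field_simp; ring
  linarith

lemma two_div_le_log_one_add_inv {r : ℝ} (hr : 0 < r) :
    2 / (4 * r + 1) ≤ log (1 + 1 / (2 * r)) := by
  have h := le_log_one_add_of_nonneg (x := 1 / (2 * r)) (by positivity)
  have : 2 * (1 / (2 * r)) / (1 / (2 * r) + 2) = 2 / (4 * r + 1) := by
    field_simp; ring
  linarith

lemma exp_add_mul_le {a d t : ℝ} (ht0 : 0 ≤ t) (ht1 : t ≤ 1) :
    exp (a + t * d) ≤ exp a * (1 + t * (exp d - 1)) := by
  have h := convexOn_exp.2 (Set.mem_univ a) (Set.mem_univ (a + d)) (sub_nonneg.2 ht1) ht0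
    (by ring)
  simp only [smul_eq_mul, exp_add a d] at h
  calc exp (a + t * d) = exp ((1 - t) * a + t * (a + d)) := by ring_nf
    _ ≤ _ := h
    _ = _ := by ring

lemma mul_log_le_sub_one_mul_log_one_add_two_mul {r : ℝ} (hr : 1 ≤ r) :
    r * log r ≤ (r - 1) * log (1 + 2 * r) := by
  have hr0 : 0 < r := by linarith
  have hsplit : log (1 + 2 * r) = log 2 + log r + log (1 + 1 / (2 * r)) := by
    rw [← log_mul two_ne_zero hr0.ne', ← log_mul (by positivity) (by positivity)]
    congr 1; field_simp; ring
  have hlog := log_le_half_sub_inv hr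
  have hinv := mul_le_mul_of_nonneg_left (two_div_le_log_one_add_inv hr0)
    (by linarith : (0:ℝ) ≤ r - 1)
  have hrat : (r - r⁻¹) / 2 ≤ (r - 1) * (0.69 + 2 / (4 * r + 1)) := by
    rw [div_le_iff₀ two_pos, ← sub_nonneg]
    have : (r - 1) * (0.69 + 2 / (4 * r + 1)) * 2 - (r - r⁻¹)
        = (r - 1) * (0.38 * r * (4 * r + 1) - 1) / (r * (4 * r + 1)) := by
      field_simp; ring
    rw [this]
    exact div_nonneg (mul_nonneg (by linarith) (by nlinarith)) (by positivity)
  rw [hsplit]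
  nlinarith [log_two_gt_d9]

noncomputable def zsExponent (r : ℝ) : ℝ := (1 + log r) / (r - 1)

noncomputable def zsThreshold (r : ℝ) : ℝ := 2 * r * exp (-zsExponent r)

lemma zsExponent_mul {r : ℝ} (hr : 1 < r) : zsExponent r * (r - 1) = 1 + log r := by
  rw [zsExponent, div_mul_cancel₀ _ (by linarith)]

lemma zsExponent_nonneg {r : ℝ} (hr : 1 < r) : 0 ≤ zsExponent r :=
  div_nonneg (by linarith [log_nonneg hr.le]) (by linarith)

lemma zsExponent_le_one_add_log_two {r : ℝ} (hr : 2 ≤ r) : zsExponent r ≤ 1 + log 2 := by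
  have hhalf : log (r / 2) ≤ r / 2 - 1 := log_le_sub_one_of_pos (by positivity)
  rw [log_div (by positivity) two_ne_zero] at hhalf
  rw [zsExponent, div_le_iff₀ (by linarith)]
  nlinarith [log_two_gt_d9]

lemma sq_sub_four_mul_add_one_nonpos {r : ℝ} (hr : 1 < r) (hc : 1 ≤ zsExponent r) :
    r ^ 2 - 4 * r + 1 ≤ 0 := by
  have hr0 : 0 < r := by linarith
  have hlog := log_le_half_sub_inv hr.le
  have hsub : r - 1 ≤ 1 + log r := by
    have := mul_le_mul_of_nonneg_right hc (by linarith : (0:ℝ) ≤ r - 1)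
    rwa [one_mul, zsExponent_mul hr] at this
  have : (r - r⁻¹) / 2 = (r ^ 2 - 1) / (2 * r) := by field_simp
  rw [this, le_div_iff₀ (by positivity)] at hlog
  nlinarith

lemma zsThreshold_pos {r : ℝ} (hr : 0 < r) : 0 < zsThreshold r := by
  unfold zsThreshold; positivity

lemma zsThreshold_le_sub_one {r : ℝ} (h1 : 1 < r) (h2 : r ≤ 2) : zsThreshold r ≤ r - 1 := by
  set c := zsExponent r
  set s := r - 1
  have hs0 : 0 < s := by linarith
  have hc : 0 ≤ c := zsExponent_nonneg h1
  -- from `log r ≥ 2 s / (s + 2)`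
  have hk : 3 * s + 2 ≤ c * s * (s + 2) := by
    have hlog := le_log_one_add_of_nonneg hs0.le
    rw [show 1 + s = r by ring] at hlog
    have : 2 * s / (s + 2) * (s + 2) = 2 * s := div_mul_cancel₀ _ (by linarith)
    rw [zsExponent_mul h1]
    nlinarith
  have hpoly : 2 * s + 2 ≤ s * (1 + c + c ^ 2 / 2) := by
    have hk2 : (s + 2) ^ 2 * (4 * s + 2 * s ^ 2)
        ≤ (s + 2) ^ 2 * ((c * s) ^ 2 + 2 * s * (c * s)) := by
      nlinarith [mul_nonneg (sub_nonneg.2 hk)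
          (by positivity : (0:ℝ) ≤ c * s * (s + 2) + 3 * s + 2 + 2 * s * (s + 2)),
        mul_pos hs0 hs0, mul_pos (mul_pos hs0 hs0) hs0]
    have hk3 := le_of_mul_le_mul_left hk2 (by positivity)
    nlinarith
  have hq := quadratic_le_exp_of_nonneg hc
  rw [zsThreshold, exp_neg, ← div_eq_mul_inv, div_le_iff₀ (exp_pos _)]
  nlinarith

noncomputable def gapLowerBound (r c : ℝ) : ℝ :=
  1 - log 2 + c + 2 * (r - 1) / (4 * r + 1) - exp c * (4 * r + exp c) / (4 * (2 * r + exp c))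

lemma gapLowerBound_le {r : ℝ} (hr : 1 < r) :
    gapLowerBound r (zsExponent r)
      ≤ (r - 1) * log (1 + 2 * r) - r * log (1 + zsThreshold r) := by
  set c := zsExponent r
  set E := exp c
  have hr0 : 0 < r := by linarith
  have hE : 0 < E := exp_pos c
  have h2r : log (2 * r) = log 2 + log r := log_mul two_ne_zero hr0.ne'
  have hiph : log (1 + 2 * r) = log (2 * r) + log (1 + 1 / (2 * r)) := by
    rw [← log_mul (by positivity) (by positivity)]; congr 1; field_simp; ring
  have hzs : log (1 + zsThreshold r) = log (2 * r) - c + log (1 + E / (2 * r)) := by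
    have : 1 + zsThreshold r = 2 * r / E * (1 + E / (2 * r)) := by
      rw [zsThreshold, exp_neg]; field_simp; ring
    rw [this, log_mul (by positivity) (by positivity), log_div (by positivity) hE.ne', log_exp]
  have hB : r * log (1 + E / (2 * r)) ≤ E * (4 * r + E) / (4 * (2 * r + E)) := by
    have h := log_one_add_le_of_nonneg (u := E / (2 * r)) (by positivity)
    have : r * (E / (2 * r) * (2 + E / (2 * r)) / (2 * (1 + E / (2 * r))))
        = E * (4 * r + E) / (4 * (2 * r + E)) := by
      field_simp; ring
    rw [← this]; exact mul_le_mul_of_nonneg_left h hr0.le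
  have hinv := mul_le_mul_of_nonneg_left (two_div_le_log_one_add_inv hr0)
    (by linarith : (0:ℝ) ≤ r - 1)
  have hc := zsExponent_mul hr
  have : (r - 1) * (2 / (4 * r + 1)) = 2 * (r - 1) / (4 * r + 1) := by ring
  rw [gapLowerBound, hiph, hzs, h2r]
  linarith

lemma gapLowerBound_nonneg_of_le_one {r c : ℝ} (hr : 2 ≤ r) (hc0 : 0 ≤ c) (hc1 : c ≤ 1) :
    0 ≤ gapLowerBound r c := by
  have hE : exp c ≤ 1 + c * (exp 1 - 1) := by
    simpa using exp_add_mul_le (a := 0) (d := 1) hc0 hc1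
  have hF : exp c * (4 * r + exp c) / (4 * (2 * r + exp c)) ≤ exp c / 2 := by
    rw [div_le_iff₀ (by positivity)]; nlinarith [exp_pos c]
  have hr9 : 2 / 9 ≤ 2 * (r - 1) / (4 * r + 1) := by
    rw [div_le_div_iff₀ (by norm_num) (by linarith)]; linarith
  have := log_two_lt_d9
  have := exp_one_lt_d9
  rw [gapLowerBound]
  nlinarith

lemma gapLowerBound_nonneg_of_one_le {r c : ℝ} (hr : 2 ≤ r) (hr' : r ^ 2 - 4 * r + 1 ≤ 0)
    (hc1 : 1 ≤ c) (hc2 : c ≤ 1 + log 2) : 0 ≤ gapLowerBound r c := by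
  have hl := log_two_gt_d9
  set t := (c - 1) / log 2
  have ht0 : 0 ≤ t := div_nonneg (by linarith) (by linarith)
  have ht1 : t ≤ 1 := (div_le_one (by linarith)).2 (by linarith)
  have hct : c = 1 + t * log 2 := by simp only [t]; field_simp; ring
  have hE : exp c ≤ exp 1 * (1 + t) := by
    have := exp_add_mul_le (a := 1) (d := log 2) ht0 ht1
    rwa [exp_log two_pos, ← hct, show (2:ℝ) - 1 = 1 by norm_num, mul_one] at this
  -- the discriminant of this quadratic in `exp c` is `16 (r ^ 2 - 4 r + 1)`
  have hF : exp c * (4 * r + exp c) / (4 * (2 * r + exp c)) ≤ (1 + exp c) / 3 := by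
    rw [div_le_div_iff₀ (by positivity) (by norm_num)]
    nlinarith [sq_nonneg (exp c - 2 * (r - 1))]
  have hr9 : 2 / 9 ≤ 2 * (r - 1) / (4 * r + 1) := by
    rw [div_le_div_iff₀ (by norm_num) (by linarith)]; linarith
  have het : exp 1 * t ≤ 2.7182818286 * t := mul_le_mul_of_nonneg_right exp_one_lt_d9.le ht0
  have hlt : 0.6931471803 * t ≤ t * log 2 := by
    rw [mul_comm]; exact mul_le_mul_of_nonneg_left hl.le ht0
  rw [gapLowerBound]
  linarith [log_two_lt_d9, exp_one_lt_d9]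

theorem mul_log_one_add_zsThreshold_le {r : ℝ} (hr : 1 < r) :
    r * log (1 + zsThreshold r) ≤ (r - 1) * log (1 + 2 * r) := by
  have hr0 : 0 < r := by linarith
  rcases le_or_gt r 2 with h2 | h2
  · calc r * log (1 + zsThreshold r) ≤ r * log r :=
          mul_le_mul_of_nonneg_left (log_le_log (by linarith [zsThreshold_pos hr0])
            (by linarith [zsThreshold_le_sub_one hr h2])) hr0.le
      _ ≤ (r - 1) * log (1 + 2 * r) := mul_log_le_sub_one_mul_log_one_add_two_mul hr.le
  · suffices 0 ≤ gapLowerBound r (zsExponent r) by linarith [gapLowerBound_le hr]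
    rcases le_or_gt (zsExponent r) 1 with hc | hc
    · exact gapLowerBound_nonneg_of_le_one h2.le (zsExponent_nonneg hr) hc
    · exact gapLowerBound_nonneg_of_one_le h2.le (sq_sub_four_mul_add_one_nonpos hr hc.le) hc.le
        (zsExponent_le_one_add_log_two h2.le)

lemma sub_one_mul_log_le_of_iph_le_one {r x : ℝ} (hr : 1 < r) (hx : 0 < 1 + x)
    (h : (1 + 2 * r) ^ (r - 1) * (1 + x) ^ (-r) ≤ 1) :
    (r - 1) * log (1 + 2 * r) ≤ r * log (1 + x) := by
  have h2r : 0 < 1 + 2 * r := by linarith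
  have := log_le_log (by positivity) h
  rw [log_one, log_mul (by positivity) (by positivity), log_rpow h2r, log_rpow hx] at this
  linarith

lemma zs_le_one_of_zsThreshold_le {r δ : ℝ} (hr : 1 < r) (hδ : 0 < 1 + δ)
    (h : zsThreshold r ≤ 2 * (r - 1) / (1 + δ)) :
    (1 / (r * exp 1)) * ((1 + δ) / (1 - 1 / r)) ^ (r - 1) ≤ 1 := by
  have hr0 : 0 < r := by linarith
  have hbase : (1 + δ) / (1 - 1 / r) ≤ exp (zsExponent r) := by
    rw [zsThreshold, exp_neg, le_div_iff₀ hδ] at h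
    rw [div_le_iff₀ (by rw [sub_pos, div_lt_one hr0]; exact hr)]
    field_simp at h ⊢
    nlinarith [exp_pos (zsExponent r)]
  have hpow : exp (zsExponent r) ^ (r - 1) = r * exp 1 := by
    rw [← exp_mul, zsExponent_mul hr, exp_add, exp_log hr0, mul_comm]
  rw [one_div_mul_eq_div, div_le_one (by positivity), ← hpow]
  exact rpow_le_rpow (div_nonneg hδ.le (by rw [sub_nonneg, div_le_one hr0]; exact hr.le)) hbase
    (by linarith)

theorem stmt_14 (r δ : ℝ) (hr : 1 < r) (hδ : 0 ≤ δ) :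
    (1 + 2 * r) ^ (r - 1) * (1 + 2 * (r - 1) / (1 + δ)) ^ (-r) ≤ 1 →
      (1 / (r * Real.exp 1)) * ((1 + δ) / (1 - 1 / r)) ^ (r - 1) ≤ 1 := by
  intro h
  have hδ' : 0 < 1 + δ := by linarith
  have hx : 0 < 2 * (r - 1) / (1 + δ) := div_pos (by linarith) hδ'
  refine zs_le_one_of_zsThreshold_le hr hδ' ?_
  have hlog := (mul_log_one_add_zsThreshold_le hr).trans
    (sub_one_mul_log_le_of_iph_le_one hr (by linarith) h)
  have := (log_le_log_iff (by linarith [zsThreshold_pos (by linarith : (0:ℝ) < r)])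
    (by linarith)).1 (le_of_mul_le_mul_left hlog (by linarith))
  linarith
end
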